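/- arXiv:1705.08318 — 2 statements merged into one kernel-verified Lean document; each statement's English description precedes it below -/
import Mathlib

section
/- A spiral deformation preserves isotropy: if X : ℝ² → ℝ is a stationary isotropic random field (its law is invariant under translations and rotations of the index set) and θ is a spiral deformation, then the deformed field X ∘ θ is isotropic, i.e. for every rotation ρ ∈ SO(2), the field t ↦ X(θ(ρ t)) has the same law as t ↦ X(θ(t)). -/
noncomputable section

open MeasureTheory

/-- Rotation of the plane by angle `α`. -/
def rot (α : ℝ) (p : ℝ × ℝ) : ℝ × ℝ :=
  (p.1 * Real.cos α - p.2 * Real.sin α, p.1 * Real.sin α + p.2 * Real.cos α)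

/-- A homeomorphism `θ` of `ℝ²` fixing `0` is a *spiral deformation* if in polar coordinates
it has the form `θ̂(r,φ) = (f r, g r + ε φ)`. -/
def IsSpiral (θ : (ℝ × ℝ) ≃ₜ (ℝ × ℝ)) : Prop :=
  θ 0 = 0 ∧
  ∃ (f : ℝ → ℝ) (g : ℝ → Real.Angle) (ε : ℤ),
    (ε = 1 ∨ ε = -1) ∧
    StrictMonoOn f (Set.Ioi 0) ∧
    (∀ r ∈ Set.Ioi (0 : ℝ), f r ∈ Set.Ioi (0 : ℝ)) ∧
    Set.Ioi (0 : ℝ) ⊆ f '' Set.Ioi 0 ∧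
    ∀ r : ℝ, 0 < r → ∀ φ : ℝ,
      θ (r * Real.cos φ, r * Real.sin φ) =
        (f r * Real.Angle.cos (g r + ε • (φ : Real.Angle)),
         f r * Real.Angle.sin (g r + ε • (φ : Real.Angle)))

/-!
A spiral deformation commutes with rotations up to the sign `ε` of its angular part:
`θ ∘ ρ_α = ρ_{εα} ∘ θ`. Hence `X ∘ θ ∘ ρ_α = (X ∘ ρ_{εα}) ∘ θ`, and `X ∘ ρ_{εα}` has the same law
as `X` by isotropy of `X`.
-/

lemma rot_zero (α : ℝ) : rot α 0 = 0 := by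
  simp [rot, Prod.ext_iff]

lemma rot_polar (α r φ : ℝ) :
    rot α (r * Real.cos φ, r * Real.sin φ) = (r * Real.cos (φ + α), r * Real.sin (φ + α)) := by
  simp only [rot, Real.cos_add, Real.sin_add, Prod.mk.injEq]
  constructor <;> ring

lemma exists_polar_of_ne_zero {t : ℝ × ℝ} (ht : t ≠ 0) :
    ∃ r : ℝ, 0 < r ∧ ∃ φ : ℝ, t = (r * Real.cos φ, r * Real.sin φ) := by
  set z : ℂ := Complex.equivRealProd.symm t
  have hz : z ≠ 0 := fun h => ht (by simpa [z, Prod.ext_iff] using congrArg Complex.equivRealProd h)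
  refine ⟨‖z‖, norm_pos_iff.mpr hz, z.arg, ?_⟩
  rw [Complex.norm_mul_cos_arg, Complex.norm_mul_sin_arg]
  simp [z]

lemma IsSpiral.exists_semiconj_rot {θ : (ℝ × ℝ) ≃ₜ (ℝ × ℝ)} (hθ : IsSpiral θ) :
    ∃ ε : ℤ, ∀ α : ℝ, Function.Semiconj θ (rot α) (rot (ε * α)) := by
  obtain ⟨hθ0, f, g, ε, -, -, -, -, hpolar⟩ := hθ
  refine ⟨ε, fun α t => ?_⟩
  rcases eq_or_ne t 0 with rfl | ht
  · rw [rot_zero, hθ0, rot_zero]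
  obtain ⟨r, hr, φ, rfl⟩ := exists_polar_of_ne_zero ht
  have hangle : g r + ε • ((φ + α : ℝ) : Real.Angle)
      = (g r + ε • (φ : Real.Angle)) + ((ε * α : ℝ) : Real.Angle) := by
    rw [Real.Angle.coe_add, smul_add, ← add_assoc, ← Real.Angle.coe_zsmul ε α, zsmul_eq_mul]
  rw [rot_polar, hpolar r hr, hpolar r hr, hangle, Real.Angle.cos_add _ ((ε * α : ℝ) : _),
    Real.Angle.sin_add _ ((ε * α : ℝ) : _), Real.Angle.cos_coe, Real.Angle.sin_coe]
  simp only [rot, Prod.mk.injEq]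
  constructor <;> ring

lemma map_precomp_eq_of_semiconj {S T E : Type*} [MeasurableSpace E] {μ : Measure (T → E)}
    {θ : S → T} {a : S → S} {b : T → T} (hb : μ.map (fun ω t => ω (b t)) = μ)
    (hθ : Function.Semiconj θ a b) :
    μ.map (fun ω s => ω (θ (a s))) = μ.map (fun ω s => ω (θ s)) := by
  have hfactor : (fun (ω : T → E) s => ω (θ (a s))) =
      (fun ω s => ω (θ s)) ∘ (fun ω t => ω (b t)) := by
    funext ω s
    simp only [Function.comp_apply, hθ s]
  rw [hfactor, ← Measure.map_map (by fun_prop) (by fun_prop), hb]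

theorem spiral_preserves_isotropy_general
    (μ : Measure ((ℝ × ℝ) → ℝ))
    (hiso : ∀ α : ℝ, Measure.map (fun ω => fun t => ω (rot α t)) μ = μ)
    (θ : (ℝ × ℝ) ≃ₜ (ℝ × ℝ)) (hθ : IsSpiral θ) :
    ∀ α : ℝ, Measure.map (fun ω => fun t => ω (θ (rot α t))) μ =
      Measure.map (fun ω => fun t => ω (θ t)) μ := by
  obtain ⟨ε, hcomm⟩ := hθ.exists_semiconj_rot
  exact fun α => map_precomp_eq_of_semiconj (hiso (ε * α)) (hcomm α)

/-- A spiral deformation preserves isotropy: if the law `μ` of a random field on `ℝ²`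
(viewed as a probability measure on the function space `ℝ² → ℝ`) is invariant under all
translations and all rotations of the index set, and `θ` is a spiral deformation, then the
deformed field `X ∘ θ` is isotropic: for every rotation `ρ_α ∈ SO(2)` the field
`t ↦ X(θ(ρ_α t))` has the same law as `t ↦ X(θ t)`. -/
theorem spiral_preserves_isotropy
    (μ : Measure ((ℝ × ℝ) → ℝ)) [IsProbabilityMeasure μ]
    (hstat : ∀ v : ℝ × ℝ, Measure.map (fun ω => fun t => ω (t + v)) μ = μ)
    (hiso : ∀ α : ℝ, Measure.map (fun ω => fun t => ω (rot α t)) μ = μ)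
    (θ : (ℝ × ℝ) ≃ₜ (ℝ × ℝ)) (hθ : IsSpiral θ) :
    ∀ α : ℝ, Measure.map (fun ω => fun t => ω (θ (rot α t))) μ =
      Measure.map (fun ω => fun t => ω (θ t)) μ :=
  spiral_preserves_isotropy_general μ hiso θ hθ
end
end

section
/- Suppose θ : ℝ² → ℝ² is a homeomorphism with θ(0)=0 satisfying ‖θ(ρ x) − θ(ρ y)‖ = ‖θ(x) − θ(y)‖ for all rotations ρ ∈ SO(2) and all x, y ∈ ℝ². Then the radial part of θ is a radial function: there exists f : (0,∞) → (0,∞), strictly increasing with limit 0 at 0 and limit +∞ at +∞, such that ‖θ(x)‖ = f(‖x‖) for all x ≠ 0. -/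
/-! Taking `y = 0` in the hypothesis shows that `‖θ x‖` is invariant under rotations, hence
`‖θ x‖ = f ‖x‖` with `f r = ‖θ (r, 0)‖`. This `f` is continuous, vanishes only at `0`, and is
unbounded because `θ` is onto. It is injective on `[0, ∞)`: if `f r = f s` with `r < s`, the
preimage under `θ` of the circle of radius `f r` is connected and meets the circles of radii `r`
and `s`, hence every circle in between, so `θ` maps the open annulus `r < ‖x‖ < s` into a circle,
which has empty interior. A continuous injective function on an interval is strictly monotone. -/

noncomputable section

/-- The Euclidean norm on `ℝ²`. -/
noncomputable def enorm2 (p : ℝ × ℝ) : ℝ := Real.sqrt (p.1 ^ 2 + p.2 ^ 2)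

open Set Filter Topology Metric Complex

namespace Homeomorph

variable {E F : Type*} [NormedAddCommGroup E] [NormedAddCommGroup F] {θ : E ≃ₜ F} {f : ℝ → ℝ}

theorem tendsto_atTop_of_norm_apply_eq [NormedSpace ℝ F] [Nontrivial F] (hf : ∀ x, ‖θ x‖ = f ‖x‖)
    (hmono : MonotoneOn f (Ici 0)) : Tendsto f atTop atTop := by
  refine tendsto_atTop.2 fun M ↦ ?_
  obtain ⟨y, hy⟩ := exists_norm_eq F (le_max_right M 0)
  filter_upwards [eventually_ge_atTop ‖θ.symm y‖] with t ht
  calc M ≤ ‖y‖ := hy ▸ le_max_left M 0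
    _ = f ‖θ.symm y‖ := by rw [← hf, θ.apply_symm_apply]
    _ ≤ f t := hmono (norm_nonneg _) ((norm_nonneg _).trans ht) ht

variable [NormedSpace ℝ E] [Nontrivial E]

theorem continuousOn_Ici_of_norm_apply_eq (hf : ∀ x, ‖θ x‖ = f ‖x‖) :
    ContinuousOn f (Ici 0) := by
  obtain ⟨v, hv⟩ := exists_norm_eq E zero_le_one
  have hcont : Continuous fun t : ℝ ↦ ‖θ (t • v)‖ := by fun_prop
  refine hcont.continuousOn.congr fun t ht ↦ ?_
  simp [hf, norm_smul, hv, abs_of_nonneg (mem_Ici.1 ht)]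

theorem eqOn_Icc_of_norm_apply_eq [NormedSpace ℝ F] (hF : 1 < Module.rank ℝ F)
    (hf : ∀ x, ‖θ x‖ = f ‖x‖) {r s : ℝ} (hr : 0 ≤ r) (hrs : r ≤ s) (hfrs : f r = f s) :
    EqOn f (fun _ ↦ f r) (Icc r s) := by
  set S := norm '' (θ.symm '' sphere 0 (f r))
  have mem_S : ∀ t, 0 ≤ t → f t = f r → t ∈ S := fun t ht hft ↦ by
    obtain ⟨x, rfl⟩ := exists_norm_eq E ht
    exact ⟨x, ⟨θ x, by simp [hf, hft], θ.symm_apply_apply x⟩, rfl⟩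
  have hS : IsPreconnected S :=
    ((isPreconnected_sphere hF 0 _).image _ θ.symm.continuous.continuousOn).image _
      continuous_norm.continuousOn
  rintro t ht
  obtain ⟨_, ⟨y, hy, rfl⟩, rfl⟩ :=
    hS.Icc_subset (mem_S r hr rfl) (mem_S s (hr.trans hrs) hfrs.symm) ht
  simpa [← hf] using hy

theorem injOn_Ici_of_norm_apply_eq [NormedSpace ℝ F] (hF : 1 < Module.rank ℝ F)
    (hf : ∀ x, ‖θ x‖ = f ‖x‖) : InjOn f (Ici 0) := by
  intro r hr s hs hfrs
  by_contra hne
  wlog hlt : r < s generalizing r s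
  · exact this hs hr hfrs.symm (Ne.symm hne) ((not_lt.1 hlt).lt_of_ne (Ne.symm hne))
  set U := θ '' (norm ⁻¹' Ioo r s)
  have hU : IsOpen U := θ.isOpenMap _ (isOpen_Ioo.preimage continuous_norm)
  have hUne : U.Nonempty := by
    obtain ⟨x, hx⟩ := exists_norm_eq E (show 0 ≤ (r + s) / 2 by linarith [mem_Ici.1 hr])
    exact ⟨θ x, x, by simp only [mem_preimage, hx, mem_Ioo]; constructor <;> linarith, rfl⟩
  have hUS : U ⊆ sphere 0 (f r) := by
    rintro _ ⟨x, hx, rfl⟩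
    simpa [hf] using eqOn_Icc_of_norm_apply_eq hF hf hr hlt.le hfrs (Ioo_subset_Icc_self hx)
  have : Nontrivial F := θ.symm.surjective.nontrivial
  simpa [interior_sphere'] using hUne.mono (interior_maximal hUS hU)

theorem pos_of_norm_apply_eq (hθ0 : θ 0 = 0) (hf : ∀ x, ‖θ x‖ = f ‖x‖) {r : ℝ} (hr : 0 < r) :
    0 < f r := by
  obtain ⟨x, rfl⟩ := exists_norm_eq E hr.le
  rw [← hf, norm_pos_iff, ← hθ0, θ.injective.ne_iff]
  exact norm_pos_iff.1 hr

theorem strictMonoOn_Ici_of_norm_apply_eq [NormedSpace ℝ F] (hF : 1 < Module.rank ℝ F)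
    (hθ0 : θ 0 = 0) (hf : ∀ x, ‖θ x‖ = f ‖x‖) : StrictMonoOn f (Ici 0) := by
  have hf0 : f 0 = 0 := by simpa [hθ0] using (hf 0).symm
  intro a ha b hb hab
  have hb0 : 0 < b := (mem_Ici.1 ha).trans_lt hab
  have hmono : StrictMonoOn f (Icc 0 b) :=
    ((continuousOn_Ici_of_norm_apply_eq hf).mono Icc_subset_Ici_self).strictMonoOn_of_injOn_Icc
      hb0.le (by rw [hf0]; exact (pos_of_norm_apply_eq hθ0 hf hb0).le)
      ((injOn_Ici_of_norm_apply_eq hF hf).mono Icc_subset_Ici_self)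
  exact hmono ⟨ha, hab.le⟩ ⟨hb0.le, le_rfl⟩ hab

theorem tendsto_nhdsGT_zero_of_norm_apply_eq (hθ0 : θ 0 = 0) (hf : ∀ x, ‖θ x‖ = f ‖x‖) :
    Tendsto f (𝓝[>] 0) (𝓝 0) := by
  have hf0 : f 0 = 0 := by simpa [hθ0] using (hf 0).symm
  simpa [hf0] using ((continuousOn_Ici_of_norm_apply_eq hf) 0 self_mem_Ici).tendsto.mono_left
    (nhdsWithin_mono _ Ioi_subset_Ici_self)

end Homeomorph

theorem Complex.apply_eq_apply_norm_of_forall_exp_mul {α : Type*} {g : ℂ → α}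
    (hg : ∀ (t : ℝ) (z : ℂ), g (exp (t * I) * z) = g z) (z : ℂ) : g z = g ‖z‖ := by
  conv_lhs => rw [← norm_mul_exp_arg_mul_I z, mul_comm, hg]

theorem enorm2_eq_norm (p : ℝ × ℝ) : enorm2 p = ‖equivRealProd.symm p‖ := by
  rw [enorm2, Complex.norm_def, Complex.normSq_apply]
  simp [sq]

theorem rot_equivRealProd (α : ℝ) (z : ℂ) :
    rot α (equivRealProd z) = equivRealProd (exp (α * I) * z) := by
  ext <;> simp [rot, exp_mul_I, ← ofReal_cos, ← ofReal_sin] <;> ring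

/-- If a homeomorphism `θ` of `ℝ²` with `θ 0 = 0` satisfies
`‖θ(ρx) − θ(ρy)‖ = ‖θ(x) − θ(y)‖` for all rotations `ρ ∈ SO(2)` and all `x, y`, then its
radial part is a radial function: there exists `f : (0,∞) → (0,∞)` strictly increasing,
with limit `0` at `0` and `+∞` at `+∞`, such that `‖θ(x)‖ = f(‖x‖)` for all `x ≠ 0`. -/
theorem radial_part_is_radial (θ : (ℝ × ℝ) ≃ₜ (ℝ × ℝ)) (hθ0 : θ 0 = 0)
    (h : ∀ α : ℝ, ∀ x y : ℝ × ℝ,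
      enorm2 (θ (rot α x) - θ (rot α y)) = enorm2 (θ x - θ y)) :
    ∃ f : ℝ → ℝ,
      StrictMonoOn f (Set.Ioi 0) ∧
      (∀ r ∈ Set.Ioi (0 : ℝ), 0 < f r) ∧
      Filter.Tendsto f (nhdsWithin 0 (Set.Ioi 0)) (nhds 0) ∧
      Filter.Tendsto f Filter.atTop Filter.atTop ∧
      ∀ x : ℝ × ℝ, x ≠ 0 → enorm2 (θ x) = f (enorm2 x) := by
  let Θ : ℂ ≃ₜ ℂ :=
    equivRealProdCLM.toHomeomorph.trans (θ.trans equivRealProdCLM.toHomeomorph.symm)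
  have hΘ : ∀ z, ‖Θ z‖ = enorm2 (θ (equivRealProd z)) := fun z ↦ (enorm2_eq_norm _).symm
  have hΘ0 : Θ 0 = 0 := by simp [Θ, ← Prod.zero_eq_mk, hθ0]
  have hrot : ∀ (t : ℝ) z, ‖Θ (exp (t * I) * z)‖ = ‖Θ z‖ := fun t z ↦ by
    have h0 : θ (equivRealProd 0) = 0 := hθ0
    have := h t (equivRealProd z) (equivRealProd 0)
    rwa [rot_equivRealProd, rot_equivRealProd, mul_zero, h0, sub_zero, sub_zero, ← hΘ, ← hΘ]
      at this
  let f : ℝ → ℝ := fun r ↦ ‖Θ r‖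
  have hf : ∀ z, ‖Θ z‖ = f ‖z‖ := Complex.apply_eq_apply_norm_of_forall_exp_mul hrot
  have hF : 1 < Module.rank ℝ ℂ := by simp [rank_real_complex]
  have hmono := Θ.strictMonoOn_Ici_of_norm_apply_eq hF hΘ0 hf
  refine ⟨f, hmono.mono Ioi_subset_Ici_self, fun r hr ↦ Θ.pos_of_norm_apply_eq hΘ0 hf hr,
    Θ.tendsto_nhdsGT_zero_of_norm_apply_eq hΘ0 hf,
    Θ.tendsto_atTop_of_norm_apply_eq hf hmono.monotoneOn, fun x _ ↦ ?_⟩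
  rw [enorm2_eq_norm x, ← hf, hΘ, Equiv.apply_symm_apply]
end
end
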